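/- arXiv:2509.07079 — 2 statements merged into one kernel-verified Lean document; each statement's English description precedes it below -/
import Mathlib

section
/- Let H(β) = H_C + H_R(β) + β·X·Y be a Hermitian operator on a tensor product Hilbert space ℋ_C ⊗ ℋ_R, where H_C acts on ℋ_C with unique (nondegenerate) ground state |0⟩_C of energy λ_C and spectral gap Δ > 0, H_R(β) acts on ℋ_R, X acts on ℋ_C with X|0⟩_C = 0, and Y acts on ℋ_R. If β·‖X‖·‖Y‖ < Δ, then every ground state of H(β) is of the form |0⟩_C ⊗ |ψ⟩_R with |ψ⟩_R a ground state of H_R(β), and the ground state energy of H(β) equals λ_C + min spec(H_R(β)). -/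
/-!
Decompose an eigenvector `v` of `H` as `v = gC ⊗ φ + w`, where every column of `w` is orthogonal
to `gC`. Since `X gC = 0`, `H (gC ⊗ φ) = gC ⊗ (lamC φ + H_R φ)` is again orthogonal to `w`, so
`⟪w, H w⟫ = E ‖w‖²`. On such `w` the term `H_C ⊗ 1` costs at least `lamC + Δ`, the term `1 ⊗ H_R`
at least `lamR`, and the coupling gains at most `β ‖X‖ ‖Y‖ < Δ`; hence `w ≠ 0` forces
`E > lamC + lamR`. If `w = 0`, then `φ` is an eigenvector of `H_R` with eigenvalue `E - lamC`,
so `E ≥ lamC + lamR`, with equality exactly for ground states `φ` of `H_R`.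
-/

open Kronecker

/-- The operator (ℓ²→ℓ²) norm of a complex matrix. -/
noncomputable def opNorm {k : ℕ} (M : Matrix (Fin k) (Fin k) ℂ) : ℝ :=
  ‖Matrix.toEuclideanCLM (𝕜 := ℂ) M‖

open WithLp Matrix RCLike

section Slices

variable {𝕜 : Type*} [RCLike 𝕜] {ι κ : Type*} [Fintype ι] [Fintype κ]

theorem norm_toLp_sq_eq_sum_col (v : ι × κ → 𝕜) :
    ‖toLp 2 v‖ ^ 2 = ∑ j, ‖toLp 2 fun i => v (i, j)‖ ^ 2 := by
  simp only [EuclideanSpace.norm_sq_eq]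
  exact Fintype.sum_prod_type_right _

theorem norm_toLp_sq_eq_sum_row (v : ι × κ → 𝕜) :
    ‖toLp 2 v‖ ^ 2 = ∑ i, ‖toLp 2 fun j => v (i, j)‖ ^ 2 := by
  simp only [EuclideanSpace.norm_sq_eq]
  exact Fintype.sum_prod_type _

theorem inner_toLp_eq_sum_col (v w : ι × κ → 𝕜) :
    inner 𝕜 (toLp 2 v) (toLp 2 w) =
      ∑ j, inner 𝕜 (toLp 2 fun i => v (i, j)) (toLp 2 fun i => w (i, j)) := by
  simp only [EuclideanSpace.inner_toLp_toLp, dotProduct]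
  exact Fintype.sum_prod_type_right _

theorem inner_toLp_eq_sum_row (v w : ι × κ → 𝕜) :
    inner 𝕜 (toLp 2 v) (toLp 2 w) =
      ∑ i, inner 𝕜 (toLp 2 fun j => v (i, j)) (toLp 2 fun j => w (i, j)) := by
  simp only [EuclideanSpace.inner_toLp_toLp, dotProduct]
  exact Fintype.sum_prod_type _

end Slices

section ProdVec

variable {ι κ R : Type*}

def prodVec [Mul R] (a : ι → R) (b : κ → R) : ι × κ → R := fun p => a p.1 * b p.2

theorem prodVec_injective_right [MulZeroClass R] [IsLeftCancelMulZero R] {a : ι → R}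
    (ha : a ≠ 0) : Function.Injective (prodVec (κ := κ) a) := by
  intro b b' h
  obtain ⟨i, hi⟩ := Function.ne_iff.mp ha
  funext j
  exact mul_left_cancel₀ hi (congrFun h (i, j))

theorem prodVec_ne_zero [MulZeroClass R] [NoZeroDivisors R] {a : ι → R} {b : κ → R}
    (ha : a ≠ 0) (hb : b ≠ 0) : prodVec a b ≠ 0 := by
  obtain ⟨i, hi⟩ := Function.ne_iff.mp ha
  obtain ⟨j, hj⟩ := Function.ne_iff.mp hb
  exact Function.ne_iff.mpr ⟨(i, j), mul_ne_zero hi hj⟩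

theorem prodVec_smul_right [CommMonoid R] (a : ι → R) (c : R) (b : κ → R) :
    prodVec a (c • b) = c • prodVec a b :=
  funext fun _ => mul_left_comm _ _ _

variable [Fintype ι] [Fintype κ]

theorem Matrix.kronecker_mulVec_prodVec [CommSemiring R] (A : Matrix ι ι R) (B : Matrix κ κ R)
    (a : ι → R) (b : κ → R) : (A ⊗ₖ B) *ᵥ prodVec a b = prodVec (A *ᵥ a) (B *ᵥ b) := by
  funext p
  simp only [prodVec, mulVec, dotProduct, Fintype.sum_prod_type, Finset.sum_mul_sum,
    kroneckerMap_apply]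
  exact Finset.sum_congr rfl fun i _ => Finset.sum_congr rfl fun j _ => by ring

variable {𝕜 : Type*} [RCLike 𝕜]

theorem inner_toLp_prodVec_eq_zero {a : ι → 𝕜} {w : ι × κ → 𝕜}
    (hw : ∀ j, inner 𝕜 (toLp 2 a) (toLp 2 fun i => w (i, j)) = 0) (b : κ → 𝕜) :
    inner 𝕜 (toLp 2 (prodVec a b)) (toLp 2 w) = 0 := by
  rw [inner_toLp_eq_sum_col]
  refine Finset.sum_eq_zero fun j _ => ?_
  have hcol : (toLp 2 fun i => prodVec a b (i, j)) = b j • toLp 2 a := by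
    ext i; simp [prodVec, mul_comm]
  rw [hcol, inner_smul_left, hw, mul_zero]

omit [Fintype κ] in
theorem exists_eq_prodVec_add_of_ne_zero {a : ι → 𝕜} (ha : a ≠ 0) (v : ι × κ → 𝕜) :
    ∃ φ w, v = prodVec a φ + w ∧ ∀ j, inner 𝕜 (toLp 2 a) (toLp 2 fun i => w (i, j)) = 0 := by
  have ha' : (‖toLp 2 a‖ : 𝕜) ^ 2 ≠ 0 := by
    have : toLp 2 a ≠ 0 := fun h => ha (by simpa using congrArg ofLp h)
    exact_mod_cast pow_ne_zero 2 (norm_ne_zero_iff.mpr this)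
  set φ : κ → 𝕜 := fun j => inner 𝕜 (toLp 2 a) (toLp 2 fun i => v (i, j)) / (‖toLp 2 a‖ : 𝕜) ^ 2
  refine ⟨φ, v - prodVec a φ, by abel, fun j => ?_⟩
  have hcol : (toLp 2 fun i => (v - prodVec a φ) (i, j)) =
      (toLp 2 fun i => v (i, j)) - φ j • toLp 2 a := by
    ext i; simp [prodVec, mul_comm]
  rw [hcol, inner_sub_right, inner_smul_right, inner_self_eq_norm_sq_to_K]
  exact sub_eq_zero.mpr (div_mul_cancel₀ _ ha').symm

end ProdVec

namespace Matrix

variable {𝕜 : Type*} [RCLike 𝕜] {ι κ : Type*} [Fintype ι] [Fintype κ]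

section Kronecker

variable {R : Type*} [CommSemiring R]

theorem kronecker_one_mulVec_apply [DecidableEq κ] (A : Matrix ι ι R) (v : ι × κ → R)
    (p : ι × κ) : ((A ⊗ₖ (1 : Matrix κ κ R)) *ᵥ v) p = (A *ᵥ fun i => v (i, p.2)) p.1 := by
  simp [mulVec, dotProduct, Fintype.sum_prod_type, one_apply]

theorem one_kronecker_mulVec_apply [DecidableEq ι] (B : Matrix κ κ R) (v : ι × κ → R)
    (p : ι × κ) : (((1 : Matrix ι ι R) ⊗ₖ B) *ᵥ v) p = (B *ᵥ fun j => v (p.1, j)) p.2 := by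
  simp [mulVec, dotProduct, Fintype.sum_prod_type, one_apply]

theorem kronecker_eq_kronecker_one_mul_one_kronecker [DecidableEq ι] [DecidableEq κ]
    (A : Matrix ι ι R) (B : Matrix κ κ R) : A ⊗ₖ B = (A ⊗ₖ 1) * (1 ⊗ₖ B) := by
  rw [← mul_kronecker_mul, Matrix.mul_one, Matrix.one_mul]

end Kronecker

section Norm

variable [DecidableEq ι] [DecidableEq κ]

omit [DecidableEq κ] in
theorem norm_toLp_mulVec_le (A : Matrix ι ι 𝕜) (v : ι → 𝕜) :
    ‖toLp 2 (A *ᵥ v)‖ ≤ ‖toEuclideanCLM (𝕜 := 𝕜) A‖ * ‖toLp 2 v‖ :=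
  (toEuclideanCLM (𝕜 := 𝕜) A).le_opNorm (toLp 2 v)

theorem norm_toLp_kronecker_one_mulVec_le (A : Matrix ι ι 𝕜) (v : ι × κ → 𝕜) :
    ‖toLp 2 ((A ⊗ₖ (1 : Matrix κ κ 𝕜)) *ᵥ v)‖ ≤ ‖toEuclideanCLM (𝕜 := 𝕜) A‖ * ‖toLp 2 v‖ := by
  refine (pow_le_pow_iff_left₀ (norm_nonneg _) (by positivity) two_ne_zero).mp ?_
  rw [norm_toLp_sq_eq_sum_col, mul_pow, norm_toLp_sq_eq_sum_col, Finset.mul_sum]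
  gcongr with j
  simp only [kronecker_one_mulVec_apply]
  rw [← mul_pow]
  gcongr
  exact norm_toLp_mulVec_le A _

theorem norm_toLp_one_kronecker_mulVec_le (B : Matrix κ κ 𝕜) (v : ι × κ → 𝕜) :
    ‖toLp 2 (((1 : Matrix ι ι 𝕜) ⊗ₖ B) *ᵥ v)‖ ≤ ‖toEuclideanCLM (𝕜 := 𝕜) B‖ * ‖toLp 2 v‖ := by
  refine (pow_le_pow_iff_left₀ (norm_nonneg _) (by positivity) two_ne_zero).mp ?_
  rw [norm_toLp_sq_eq_sum_row, mul_pow, norm_toLp_sq_eq_sum_row, Finset.mul_sum]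
  gcongr with i
  simp only [one_kronecker_mulVec_apply]
  rw [← mul_pow]
  gcongr
  exact norm_toLp_mulVec_le B _

theorem norm_toLp_kronecker_mulVec_le (A : Matrix ι ι 𝕜) (B : Matrix κ κ 𝕜) (v : ι × κ → 𝕜) :
    ‖toLp 2 ((A ⊗ₖ B) *ᵥ v)‖ ≤
      ‖toEuclideanCLM (𝕜 := 𝕜) A‖ * ‖toEuclideanCLM (𝕜 := 𝕜) B‖ * ‖toLp 2 v‖ := by
  rw [kronecker_eq_kronecker_one_mul_one_kronecker, ← mulVec_mulVec, mul_assoc]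
  exact (norm_toLp_kronecker_one_mulVec_le A _).trans
    (by gcongr; exact norm_toLp_one_kronecker_mulVec_le B v)

theorem neg_mul_norm_sq_le_re_inner_kronecker_mulVec (A : Matrix ι ι 𝕜) (B : Matrix κ κ 𝕜)
    (v : ι × κ → 𝕜) :
    -(‖toEuclideanCLM (𝕜 := 𝕜) A‖ * ‖toEuclideanCLM (𝕜 := 𝕜) B‖ * ‖toLp 2 v‖ ^ 2) ≤
      re (inner 𝕜 (toLp 2 v) (toLp 2 ((A ⊗ₖ B) *ᵥ v))) := by
  have h := re_inner_le_norm (𝕜 := 𝕜) (toLp 2 v) (-toLp 2 ((A ⊗ₖ B) *ᵥ v))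
  rw [inner_neg_right, map_neg, norm_neg] at h
  nlinarith [norm_toLp_kronecker_mulVec_le A B v, norm_nonneg (toLp 2 v)]

end Norm

section QuadraticForm

theorem mul_norm_sq_le_re_inner_kronecker_one_mulVec [DecidableEq κ] (A : Matrix ι ι 𝕜) (c : ℝ)
    (v : ι × κ → 𝕜)
    (h : ∀ j, c * ‖toLp 2 fun i => v (i, j)‖ ^ 2 ≤
      re (inner 𝕜 (toLp 2 fun i => v (i, j)) (toLp 2 (A *ᵥ fun i => v (i, j))))) :
    c * ‖toLp 2 v‖ ^ 2 ≤ re (inner 𝕜 (toLp 2 v) (toLp 2 ((A ⊗ₖ (1 : Matrix κ κ 𝕜)) *ᵥ v))) := by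
  rw [norm_toLp_sq_eq_sum_col, inner_toLp_eq_sum_col, Finset.mul_sum, map_sum]
  simp only [kronecker_one_mulVec_apply]
  exact Finset.sum_le_sum fun j _ => h j

theorem mul_norm_sq_le_re_inner_one_kronecker_mulVec [DecidableEq ι] (B : Matrix κ κ 𝕜) (c : ℝ)
    (v : ι × κ → 𝕜)
    (h : ∀ i, c * ‖toLp 2 fun j => v (i, j)‖ ^ 2 ≤
      re (inner 𝕜 (toLp 2 fun j => v (i, j)) (toLp 2 (B *ᵥ fun j => v (i, j))))) :
    c * ‖toLp 2 v‖ ^ 2 ≤ re (inner 𝕜 (toLp 2 v) (toLp 2 (((1 : Matrix ι ι 𝕜) ⊗ₖ B) *ᵥ v))) := by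
  rw [norm_toLp_sq_eq_sum_row, inner_toLp_eq_sum_row, Finset.mul_sum, map_sum]
  simp only [one_kronecker_mulVec_apply]
  exact Finset.sum_le_sum fun i _ => h i

structure IsGappedGroundState (A : Matrix ι ι 𝕜) (g : ι → 𝕜) (lam Δ : ℝ) : Prop where
  ne_zero : g ≠ 0
  mulVec_eq : A *ᵥ g = (lam : 𝕜) • g
  gap : ∀ (v : ι → 𝕜) (μ : ℝ), v ≠ 0 → A *ᵥ v = (μ : 𝕜) • v → μ = lam ∨ lam + Δ ≤ μ
  eq_smul_of_mulVec_eq : ∀ {v : ι → 𝕜}, A *ᵥ v = (lam : 𝕜) • v → ∃ c : 𝕜, v = c • g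

variable [DecidableEq ι] {A : Matrix ι ι 𝕜}

theorem IsHermitian.mulVec_ofLp_eigenvectorBasis (hA : A.IsHermitian) (j : ι) :
    A *ᵥ ofLp (hA.eigenvectorBasis j) =
      (hA.eigenvalues j : 𝕜) • ofLp (hA.eigenvectorBasis j) := by
  rw [hA.mulVec_eigenvectorBasis j, RCLike.real_smul_eq_coe_smul (K := 𝕜)]

theorem IsHermitian.re_inner_mulVec_eq_sum (hA : A.IsHermitian) (v : ι → 𝕜) :
    re (inner 𝕜 (toLp 2 v) (toLp 2 (A *ᵥ v))) =
      ∑ j, hA.eigenvalues j * ‖inner 𝕜 (hA.eigenvectorBasis j) (toLp 2 v)‖ ^ 2 := by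
  have hcoef (j : ι) : inner 𝕜 (hA.eigenvectorBasis j) (toLp 2 (A *ᵥ v)) =
      hA.eigenvalues j * inner 𝕜 (hA.eigenvectorBasis j) (toLp 2 v) := by
    have hsymm := (isSymmetric_toEuclideanLin_iff.mpr hA) (hA.eigenvectorBasis j) (toLp 2 v)
    simp only [toLpLin_apply, hA.mulVec_ofLp_eigenvectorBasis] at hsymm
    rw [← hsymm, WithLp.toLp_smul, toLp_ofLp, inner_smul_left, conj_ofReal]
  rw [← hA.eigenvectorBasis.sum_inner_mul_inner, map_sum]
  refine Finset.sum_congr rfl fun j _ => ?_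
  rw [hcoef, ← inner_conj_symm, mul_left_comm, RCLike.conj_mul, ← ofReal_pow, ← ofReal_mul,
    ofReal_re]

theorem IsHermitian.mul_norm_sq_le_re_inner_mulVec (hA : A.IsHermitian) (c : ℝ) (v : ι → 𝕜)
    (h : ∀ (μ : ℝ) (y : ι → 𝕜), y ≠ 0 → A *ᵥ y = (μ : 𝕜) • y → μ < c →
      inner 𝕜 (toLp 2 y) (toLp 2 v) = 0) :
    c * ‖toLp 2 v‖ ^ 2 ≤ re (inner 𝕜 (toLp 2 v) (toLp 2 (A *ᵥ v))) := by
  rw [hA.re_inner_mulVec_eq_sum, ← hA.eigenvectorBasis.sum_sq_norm_inner_right, Finset.mul_sum]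
  refine Finset.sum_le_sum fun j _ => ?_
  by_cases hj : hA.eigenvalues j < c
  · have hzero := h _ (ofLp (hA.eigenvectorBasis j))
      (by simpa using hA.eigenvectorBasis.orthonormal.ne_zero j)
      (hA.mulVec_ofLp_eigenvectorBasis j) hj
    simp [hzero]
  · exact mul_le_mul_of_nonneg_right (not_lt.mp hj) (by positivity)

theorem IsHermitian.mul_norm_sq_le_re_inner_mulVec_of_mem_lowerBounds (hA : A.IsHermitian)
    {c : ℝ} (hc : c ∈ lowerBounds {μ : ℝ | ∃ y : ι → 𝕜, y ≠ 0 ∧ A *ᵥ y = (μ : 𝕜) • y})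
    (v : ι → 𝕜) : c * ‖toLp 2 v‖ ^ 2 ≤ re (inner 𝕜 (toLp 2 v) (toLp 2 (A *ᵥ v))) :=
  hA.mul_norm_sq_le_re_inner_mulVec c v fun _ y hy hμ hlt => absurd (hc ⟨y, hy, hμ⟩) hlt.not_ge

theorem IsGappedGroundState.add_mul_norm_sq_le_re_inner_mulVec {g : ι → 𝕜} {lam Δ : ℝ}
    (hg : IsGappedGroundState A g lam Δ) (hA : A.IsHermitian) {u : ι → 𝕜}
    (hu : inner 𝕜 (toLp 2 g) (toLp 2 u) = 0) :
    (lam + Δ) * ‖toLp 2 u‖ ^ 2 ≤ re (inner 𝕜 (toLp 2 u) (toLp 2 (A *ᵥ u))) := by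
  refine hA.mul_norm_sq_le_re_inner_mulVec _ u fun μ y hy hμ hlt => ?_
  obtain rfl : μ = lam := (hg.gap y μ hy hμ).resolve_right hlt.not_ge
  obtain ⟨c, rfl⟩ := hg.eq_smul_of_mulVec_eq hμ
  rw [WithLp.toLp_smul, inner_smul_left, hu, mul_zero]

end QuadraticForm

end Matrix

section SingleFrustration

variable {n m : ℕ} {HC : Matrix (Fin n) (Fin n) ℂ} {HR : Matrix (Fin m) (Fin m) ℂ}
  {X : Matrix (Fin n) (Fin n) ℂ} {Y : Matrix (Fin m) (Fin m) ℂ} {β lamC Δ lamR : ℝ}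
  {gC : Fin n → ℂ}

variable (HC HR X Y β) in
noncomputable def frustratedHamiltonian : Matrix (Fin n × Fin m) (Fin n × Fin m) ℂ :=
  HC ⊗ₖ (1 : Matrix (Fin m) (Fin m) ℂ) + (1 : Matrix (Fin n) (Fin n) ℂ) ⊗ₖ HR + β • (X ⊗ₖ Y)

theorem frustratedHamiltonian_mulVec_prodVec (heig : HC *ᵥ gC = (lamC : ℂ) • gC)
    (hX : X *ᵥ gC = 0) (φ : Fin m → ℂ) :
    frustratedHamiltonian HC HR X Y β *ᵥ prodVec gC φ =
      prodVec gC ((lamC : ℂ) • φ + HR *ᵥ φ) := by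
  rw [frustratedHamiltonian, add_mulVec, add_mulVec, smul_mulVec, kronecker_mulVec_prodVec,
    kronecker_mulVec_prodVec, kronecker_mulVec_prodVec, heig, hX, one_mulVec, one_mulVec]
  funext p
  simp only [prodVec, Pi.add_apply, Pi.smul_apply, Pi.zero_apply, smul_eq_mul, zero_mul,
    smul_zero, add_zero]
  ring

theorem mul_norm_sq_le_re_inner_frustratedHamiltonian_mulVec (hβ : 0 ≤ β) (hHC : HC.IsHermitian)
    (hHR : HR.IsHermitian) (hgC : IsGappedGroundState HC gC lamC Δ)
    (hlamR : lamR ∈ lowerBounds {μ : ℝ | ∃ ψ : Fin m → ℂ, ψ ≠ 0 ∧ HR *ᵥ ψ = (μ : ℂ) • ψ})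
    {w : Fin n × Fin m → ℂ} (hw : ∀ j, inner ℂ (toLp 2 gC) (toLp 2 fun i => w (i, j)) = 0) :
    (lamC + Δ + lamR - β * opNorm X * opNorm Y) * ‖toLp 2 w‖ ^ 2 ≤
      re (inner ℂ (toLp 2 w) (toLp 2 (frustratedHamiltonian HC HR X Y β *ᵥ w))) := by
  have hC := mul_norm_sq_le_re_inner_kronecker_one_mulVec HC (lamC + Δ) w fun j =>
    hgC.add_mul_norm_sq_le_re_inner_mulVec hHC (hw j)
  have hR := mul_norm_sq_le_re_inner_one_kronecker_mulVec HR lamR w fun i =>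
    hHR.mul_norm_sq_le_re_inner_mulVec_of_mem_lowerBounds hlamR _
  have hXY := neg_mul_norm_sq_le_re_inner_kronecker_mulVec X Y w
  have hsplit : re (inner ℂ (toLp 2 w) (toLp 2 (frustratedHamiltonian HC HR X Y β *ᵥ w))) =
      re (inner ℂ (toLp 2 w) (toLp 2 ((HC ⊗ₖ (1 : Matrix (Fin m) (Fin m) ℂ)) *ᵥ w))) +
      re (inner ℂ (toLp 2 w) (toLp 2 (((1 : Matrix (Fin n) (Fin n) ℂ) ⊗ₖ HR) *ᵥ w))) +
      β * re (inner ℂ (toLp 2 w) (toLp 2 ((X ⊗ₖ Y) *ᵥ w))) := by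
    rw [frustratedHamiltonian, add_mulVec, add_mulVec, smul_mulVec, toLp_add, toLp_add,
      inner_add_right, inner_add_right, WithLp.toLp_smul, ← Complex.coe_smul, inner_smul_right]
    simp
  rw [hsplit, opNorm, opNorm]
  nlinarith [mul_le_mul_of_nonneg_left hXY hβ]

theorem re_inner_frustratedHamiltonian_mulVec_eq (heig : HC *ᵥ gC = (lamC : ℂ) • gC)
    (hX : X *ᵥ gC = 0) {E : ℝ} {φ : Fin m → ℂ} {w : Fin n × Fin m → ℂ}
    (hw : ∀ j, inner ℂ (toLp 2 gC) (toLp 2 fun i => w (i, j)) = 0)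
    (hEv : frustratedHamiltonian HC HR X Y β *ᵥ (prodVec gC φ + w) =
      (E : ℂ) • (prodVec gC φ + w)) :
    re (inner ℂ (toLp 2 w) (toLp 2 (frustratedHamiltonian HC HR X Y β *ᵥ w))) =
      E * ‖toLp 2 w‖ ^ 2 := by
  have hperp (b : Fin m → ℂ) : inner ℂ (toLp 2 w) (toLp 2 (prodVec gC b)) = 0 :=
    inner_eq_zero_symm.mp (inner_toLp_prodVec_eq_zero hw b)
  have hHv : inner ℂ (toLp 2 w) (toLp 2 (frustratedHamiltonian HC HR X Y β *ᵥ
      (prodVec gC φ + w))) =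
      inner ℂ (toLp 2 w) (toLp 2 (frustratedHamiltonian HC HR X Y β *ᵥ w)) := by
    rw [mulVec_add, toLp_add, inner_add_right, frustratedHamiltonian_mulVec_prodVec heig hX,
      hperp, zero_add]
  have hv : inner ℂ (toLp 2 w) (toLp 2 (prodVec gC φ + w)) = (‖toLp 2 w‖ : ℂ) ^ 2 := by
    rw [toLp_add, inner_add_right, hperp, zero_add, inner_self_eq_norm_sq_to_K]
    rfl
  rw [← hHv, hEv, WithLp.toLp_smul, inner_smul_right, hv]
  norm_cast

theorem lt_of_frustratedHamiltonian_mulVec_eq_smul (hβ : 0 ≤ β) (hHC : HC.IsHermitian)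
    (hHR : HR.IsHermitian) (hgC : IsGappedGroundState HC gC lamC Δ) (hX : X *ᵥ gC = 0)
    (hlamR : lamR ∈ lowerBounds {μ : ℝ | ∃ ψ : Fin m → ℂ, ψ ≠ 0 ∧ HR *ᵥ ψ = (μ : ℂ) • ψ})
    (hsmall : β * opNorm X * opNorm Y < Δ) {E : ℝ} {φ : Fin m → ℂ} {w : Fin n × Fin m → ℂ}
    (hw0 : w ≠ 0) (hw : ∀ j, inner ℂ (toLp 2 gC) (toLp 2 fun i => w (i, j)) = 0)
    (hEv : frustratedHamiltonian HC HR X Y β *ᵥ (prodVec gC φ + w) =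
      (E : ℂ) • (prodVec gC φ + w)) :
    lamC + lamR < E := by
  have heig : HC *ᵥ gC = (lamC : ℂ) • gC := hgC.mulVec_eq
  have hbound := mul_norm_sq_le_re_inner_frustratedHamiltonian_mulVec (X := X) (Y := Y) hβ hHC
    hHR hgC hlamR hw
  rw [re_inner_frustratedHamiltonian_mulVec_eq heig hX hw hEv] at hbound
  have hpos : 0 < ‖toLp 2 w‖ ^ 2 :=
    pow_pos (norm_pos_iff.mpr fun h => hw0 (by simpa using congrArg ofLp h)) 2
  nlinarith

theorem mulVec_eq_smul_of_frustratedHamiltonian_mulVec_prodVec_eq_smul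
    (hgC : IsGappedGroundState HC gC lamC Δ) (hX : X *ᵥ gC = 0) {E : ℝ} {φ : Fin m → ℂ}
    (hEv : frustratedHamiltonian HC HR X Y β *ᵥ prodVec gC φ = (E : ℂ) • prodVec gC φ) :
    HR *ᵥ φ = ((E - lamC : ℝ) : ℂ) • φ := by
  have heig : HC *ᵥ gC = (lamC : ℂ) • gC := hgC.mulVec_eq
  rw [frustratedHamiltonian_mulVec_prodVec heig hX, ← prodVec_smul_right] at hEv
  rw [Complex.ofReal_sub, sub_smul, ← prodVec_injective_right hgC.ne_zero hEv,
    add_sub_cancel_left]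

theorem le_and_eq_prodVec_of_frustratedHamiltonian_mulVec_eq_smul (hβ : 0 ≤ β)
    (hHC : HC.IsHermitian) (hHR : HR.IsHermitian) (hgC : IsGappedGroundState HC gC lamC Δ)
    (hX : X *ᵥ gC = 0)
    (hlamR : lamR ∈ lowerBounds {μ : ℝ | ∃ ψ : Fin m → ℂ, ψ ≠ 0 ∧ HR *ᵥ ψ = (μ : ℂ) • ψ})
    (hsmall : β * opNorm X * opNorm Y < Δ) {E : ℝ} {v : Fin n × Fin m → ℂ} (hv0 : v ≠ 0)
    (hEv : frustratedHamiltonian HC HR X Y β *ᵥ v = (E : ℂ) • v) :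
    lamC + lamR ≤ E ∧ (E ≤ lamC + lamR → ∃ ψ, v = prodVec gC ψ ∧ HR *ᵥ ψ = (lamR : ℂ) • ψ) := by
  obtain ⟨φ, w, rfl, hw⟩ := exists_eq_prodVec_add_of_ne_zero hgC.ne_zero v
  by_cases hw0 : w = 0
  · subst hw0
    rw [add_zero] at hv0 hEv
    have hφ := mulVec_eq_smul_of_frustratedHamiltonian_mulVec_prodVec_eq_smul hgC hX hEv
    have hφ0 : φ ≠ 0 := by rintro rfl; exact hv0 (funext fun _ => mul_zero _)
    have hlow : lamR ≤ E - lamC := hlamR ⟨φ, hφ0, hφ⟩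
    refine ⟨by linarith, fun hE => ⟨φ, add_zero _, ?_⟩⟩
    rw [hφ, show E - lamC = lamR by linarith]
  · have hlt := lt_of_frustratedHamiltonian_mulVec_eq_smul hβ hHC hHR hgC hX hlamR hsmall hw0 hw
      hEv
    exact ⟨hlt.le, fun hE => absurd hE hlt.not_ge⟩

end SingleFrustration

theorem single_frustration_superstable_ground_state_general
    {n m : ℕ} (HC X : Matrix (Fin n) (Fin n) ℂ) (HR Y : Matrix (Fin m) (Fin m) ℂ)
    (β lamC Δ lamR : ℝ) (hβ : 0 ≤ β)
    (H : Matrix (Fin n × Fin m) (Fin n × Fin m) ℂ)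
    (hH : H = HC ⊗ₖ (1 : Matrix (Fin m) (Fin m) ℂ)
        + (1 : Matrix (Fin n) (Fin n) ℂ) ⊗ₖ HR + β • (X ⊗ₖ Y))
    (hHCherm : HC.IsHermitian) (hHRherm : HR.IsHermitian)
    (gC : Fin n → ℂ) (hgC : gC ≠ 0) (heig : HC.mulVec gC = (lamC : ℂ) • gC)
    (hgap : ∀ (v : Fin n → ℂ) (μ : ℝ), v ≠ 0 → HC.mulVec v = (μ : ℂ) • v →
      μ = lamC ∨ lamC + Δ ≤ μ)
    (hsimple : ∀ v : Fin n → ℂ, HC.mulVec v = (lamC : ℂ) • v → ∃ c : ℂ, v = c • gC)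
    (hX : X.mulVec gC = 0)
    (hlamR : IsLeast {μ : ℝ | ∃ ψ : Fin m → ℂ, ψ ≠ 0 ∧ HR.mulVec ψ = (μ : ℂ) • ψ} lamR)
    (hsmall : β * opNorm X * opNorm Y < Δ) :
    (∀ (E : ℝ) (v : Fin n × Fin m → ℂ), v ≠ 0 → H.mulVec v = (E : ℂ) • v →
        (∀ (E' : ℝ) (w : Fin n × Fin m → ℂ), w ≠ 0 → H.mulVec w = (E' : ℂ) • w → E ≤ E') →
        ∃ ψ : Fin m → ℂ, (v = fun p => gC p.1 * ψ p.2) ∧ HR.mulVec ψ = (lamR : ℂ) • ψ) ∧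
    IsLeast {E : ℝ | ∃ v : Fin n × Fin m → ℂ, v ≠ 0 ∧ H.mulVec v = (E : ℂ) • v}
      (lamC + lamR) := by
  obtain rfl : H = frustratedHamiltonian HC HR X Y β := hH
  have hgapped : IsGappedGroundState HC gC lamC Δ := ⟨hgC, heig, hgap, hsimple _⟩
  obtain ⟨⟨ψ₀, hψ₀, hψ₀eig⟩, hlamR⟩ := hlamR
  have hground : frustratedHamiltonian HC HR X Y β *ᵥ prodVec gC ψ₀ =
      ((lamC + lamR : ℝ) : ℂ) • prodVec gC ψ₀ := by
    rw [frustratedHamiltonian_mulVec_prodVec heig hX, hψ₀eig, ← add_smul, prodVec_smul_right,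
      Complex.ofReal_add]
  have hground0 : prodVec gC ψ₀ ≠ 0 := prodVec_ne_zero hgC hψ₀
  have hspec {E : ℝ} {v : Fin n × Fin m → ℂ} (hv : v ≠ 0)
      (hEv : frustratedHamiltonian HC HR X Y β *ᵥ v = (E : ℂ) • v) :=
    le_and_eq_prodVec_of_frustratedHamiltonian_mulVec_eq_smul hβ hHCherm hHRherm hgapped hX hlamR
      hsmall hv hEv
  refine ⟨fun E v hv hEv hmin => (hspec hv hEv).2 (hmin _ _ hground0 hground),
    ⟨_, hground0, hground⟩, ?_⟩
  rintro E ⟨v, hv, hEv⟩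
  exact (hspec hv hEv).1

/-- Core variational argument with a single frustrating term: if `H_C` has a simple
ground state `gC` (energy `lamC`, gap `Δ`), `X gC = 0`, and `β ‖X‖ ‖Y‖ < Δ`, then the
ground states of `H = H_C ⊗ 1 + 1 ⊗ H_R + β X ⊗ Y` are exactly `gC ⊗ ψ` with `ψ` a
ground state of `H_R`, and the ground energy is `lamC + min spec H_R`. -/
theorem single_frustration_superstable_ground_state
    {n m : ℕ} (HC X : Matrix (Fin n) (Fin n) ℂ) (HR Y : Matrix (Fin m) (Fin m) ℂ)
    (β lamC Δ lamR : ℝ) (hβ : 0 ≤ β)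
    (H : Matrix (Fin n × Fin m) (Fin n × Fin m) ℂ)
    (hH : H = HC ⊗ₖ (1 : Matrix (Fin m) (Fin m) ℂ)
        + (1 : Matrix (Fin n) (Fin n) ℂ) ⊗ₖ HR + β • (X ⊗ₖ Y))
    (hHerm : H.IsHermitian) (hHCherm : HC.IsHermitian) (hHRherm : HR.IsHermitian)
    (gC : Fin n → ℂ) (hgC : gC ≠ 0) (heig : HC.mulVec gC = (lamC : ℂ) • gC)
    (hΔ : 0 < Δ)
    (hgap : ∀ (v : Fin n → ℂ) (μ : ℝ), v ≠ 0 → HC.mulVec v = (μ : ℂ) • v →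
      μ = lamC ∨ lamC + Δ ≤ μ)
    (hsimple : ∀ v : Fin n → ℂ, HC.mulVec v = (lamC : ℂ) • v → ∃ c : ℂ, v = c • gC)
    (hX : X.mulVec gC = 0)
    (hlamR : IsLeast {μ : ℝ | ∃ ψ : Fin m → ℂ, ψ ≠ 0 ∧ HR.mulVec ψ = (μ : ℂ) • ψ} lamR)
    (hsmall : β * opNorm X * opNorm Y < Δ) :
    (∀ (E : ℝ) (v : Fin n × Fin m → ℂ), v ≠ 0 → H.mulVec v = (E : ℂ) • v →
        (∀ (E' : ℝ) (w : Fin n × Fin m → ℂ), w ≠ 0 → H.mulVec w = (E' : ℂ) • w → E ≤ E') →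
        ∃ ψ : Fin m → ℂ, (v = fun p => gC p.1 * ψ p.2) ∧ HR.mulVec ψ = (lamR : ℂ) • ψ) ∧
    IsLeast {E : ℝ | ∃ v : Fin n × Fin m → ℂ, v ≠ 0 ∧ H.mulVec v = (E : ℂ) • v}
      (lamC + lamR) :=
  single_frustration_superstable_ground_state_general HC X HR Y β lamC Δ lamR hβ H hH hHCherm
    hHRherm gC hgC heig hgap hsimple hX hlamR hsmall
end

section
/- Let H₀ and H₁ be Hermitian operators on a finite-dimensional Hilbert space, both commuting with a Hermitian operator P (a conserved quantum number). Suppose the ground state of H₀ lies in the eigenspace of P with eigenvalue p₀, the ground state of H₁ lies in the eigenspace with eigenvalue p₁, and p₀ ≠ p₁. Then along the linear interpolation H(s) = (1-s)H₀ + sH₁, s ∈ [0,1], there exists s* ∈ [0,1] at which the minimal eigenvalue of H(s) restricted to the P = p₀ eigenspace equals the minimal eigenvalue restricted to the P = p₁ eigenspace (a ground state level crossing). -/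
/-!
Every `H(s)` preserves each eigenspace of `P`, and on such an invariant subspace its least
eigenvalue is the infimum of its Rayleigh quotient there. Such an infimum is 1-Lipschitz in
the operator norm, so both sector ground energies are continuous in `s`. At `s = 0` the
`p₀`-sector contains the global ground state of `H₀`, so its energy is at most that of the
`p₁`-sector, and at `s = 1` the reverse holds; the intermediate value theorem gives the crossing.
-/

/-- The minimal eigenvalue of `M` restricted to the `P = p` eigenspace (as an infimum
over eigenvalues with eigenvector in that eigenspace). -/
noncomputable def minInSector {n : ℕ} (M P : Matrix (Fin n) (Fin n) ℂ) (p : ℝ) : ℝ :=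
  sInf {E : ℝ | ∃ v : Fin n → ℂ, v ≠ 0 ∧ P.mulVec v = (p : ℂ) • v ∧
    M.mulVec v = (E : ℂ) • v}

open Matrix Module.End

theorem abs_ciInf_sub_ciInf_le {ι : Type*} [Nonempty ι] {f g : ι → ℝ}
    (hf : BddBelow (Set.range f)) (hg : BddBelow (Set.range g)) {C : ℝ}
    (h : ∀ i, |f i - g i| ≤ C) : |(⨅ i, f i) - ⨅ i, g i| ≤ C := by
  have sub_le : ∀ {f g : ι → ℝ}, BddBelow (Set.range f) → (∀ i, f i ≤ g i + C) →
      (⨅ i, f i) - ⨅ i, g i ≤ C := by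
    intro f g hf hfg
    have : ∀ i, (⨅ i, f i) - C ≤ g i := fun i => by linarith [ciInf_le hf i, hfg i]
    linarith [le_ciInf this]
  rw [abs_sub_le_iff]
  exact ⟨sub_le hf fun i => by linarith [(abs_le.1 (h i)).2],
    sub_le hg fun i => by linarith [(abs_le.1 (h i)).1]⟩

namespace ContinuousLinearMap

variable {𝕜 E : Type*} [RCLike 𝕜] [NormedAddCommGroup E] [InnerProductSpace 𝕜 E]

noncomputable def rayleighInfOn (T : E →L[𝕜] E) (V : Submodule 𝕜 E) : ℝ :=
  ⨅ x : {x : V // x ≠ 0}, T.rayleighQuotient x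

theorem rayleighQuotient_sub (T S : E →L[𝕜] E) (x : E) :
    (T - S).rayleighQuotient x = T.rayleighQuotient x - S.rayleighQuotient x := by
  rw [sub_eq_add_neg, rayleighQuotient_add, rayleighQuotient_neg_apply, sub_eq_add_neg]

theorem rayleighQuotient_eq_of_apply_eq_smul {T : E →L[𝕜] E} {x : E} (hx : x ≠ 0) {μ : ℝ}
    (h : T x = (μ : 𝕜) • x) : T.rayleighQuotient x = μ := by
  have hx' : ‖x‖ ≠ 0 := norm_ne_zero_iff.2 hx
  rw [rayleighQuotient, reApplyInnerSelf_apply, h, inner_smul_left, inner_self_eq_norm_sq_to_K]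
  simp only [RCLike.conj_ofReal, ← RCLike.ofReal_pow, ← RCLike.ofReal_mul, RCLike.ofReal_re]
  field_simp

theorem bddBelow_rayleighQuotient_on (T : E →L[𝕜] E) (V : Submodule 𝕜 E) :
    BddBelow (Set.range fun x : {x : V // x ≠ 0} => T.rayleighQuotient x) :=
  ⟨-‖T‖, by rintro _ ⟨x, rfl⟩; exact neg_le_of_abs_le (T.rayleighQuotient_le_norm x)⟩

theorem lipschitzWith_rayleighInfOn (V : Submodule 𝕜 E) [Nontrivial V] :
    LipschitzWith 1 fun T : E →L[𝕜] E => T.rayleighInfOn V := by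
  have : Nonempty {x : V // x ≠ 0} := nonempty_subtype.2 (exists_ne 0)
  refine LipschitzWith.of_dist_le_mul fun T S => ?_
  rw [Real.dist_eq, NNReal.coe_one, one_mul, dist_eq_norm]
  refine abs_ciInf_sub_ciInf_le (T.bddBelow_rayleighQuotient_on V)
    (S.bddBelow_rayleighQuotient_on V) fun x => ?_
  rw [← rayleighQuotient_sub]
  exact (T - S).rayleighQuotient_le_norm x

theorem isLeast_rayleighInfOn [FiniteDimensional 𝕜 E] {T : E →L[𝕜] E} (hT : (T : E →ₗ[𝕜] E).IsSymmetric)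
    {V : Submodule 𝕜 E} [Nontrivial V] (hV : ∀ v ∈ V, T v ∈ V) :
    IsLeast {μ : ℝ | ∃ v ∈ V, v ≠ 0 ∧ T v = (μ : 𝕜) • v} (T.rayleighInfOn V) := by
  constructor
  · have heig : HasEigenvalue ((T : E →ₗ[𝕜] E).restrict hV) (T.rayleighInfOn V : 𝕜) :=
      (hT.restrict_invariant hV).hasEigenvalue_iInf_of_finiteDimensional
    obtain ⟨x, hx⟩ := heig.exists_hasEigenvector
    exact ⟨x, x.2, by simpa using hx.2, congrArg Subtype.val hx.apply_eq_smul⟩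
  · rintro μ ⟨v, hvV, hv0, hTv⟩
    calc T.rayleighInfOn V ≤ T.rayleighQuotient v :=
          ciInf_le (T.bddBelow_rayleighQuotient_on V) ⟨⟨v, hvV⟩, by simpa using hv0⟩
      _ = μ := rayleighQuotient_eq_of_apply_eq_smul hv0 hTv

end ContinuousLinearMap

section Sector

variable {n : ℕ}

noncomputable def sector (P : Matrix (Fin n) (Fin n) ℂ) (p : ℝ) :
    Submodule ℂ (EuclideanSpace ℂ (Fin n)) :=
  eigenspace (toEuclideanLin P) p

theorem mem_sector {P : Matrix (Fin n) (Fin n) ℂ} {p : ℝ} {v : EuclideanSpace ℂ (Fin n)} :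
    v ∈ sector P p ↔ P *ᵥ v.ofLp = (p : ℂ) • v.ofLp := by
  rw [sector, mem_eigenspace_iff]
  exact (WithLp.ofLp_injective 2).eq_iff.symm

theorem nontrivial_sector {P : Matrix (Fin n) (Fin n) ℂ} {p : ℝ}
    (h : ∃ v : Fin n → ℂ, v ≠ 0 ∧ P *ᵥ v = (p : ℂ) • v) : Nontrivial (sector P p) := by
  obtain ⟨v, hv0, hvP⟩ := h
  exact ⟨⟨⟨WithLp.toLp 2 v, mem_sector.2 hvP⟩, 0, by simpa using hv0⟩⟩

theorem Commute.mapsTo_sector {M P : Matrix (Fin n) (Fin n) ℂ} (hc : Commute M P) (p : ℝ) :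
    ∀ v ∈ sector P p, toEuclideanCLM (n := Fin n) (𝕜 := ℂ) M v ∈ sector P p := by
  intro v hv
  rw [mem_sector] at hv ⊢
  rw [ofLp_toEuclideanCLM, mulVec_mulVec, ← hc.eq, ← mulVec_mulVec, hv, mulVec_smul]

theorem isLeast_rayleighInfOn_sector {M P : Matrix (Fin n) (Fin n) ℂ} (hM : M.IsHermitian)
    (hc : Commute M P) {p : ℝ} [Nontrivial (sector P p)] :
    IsLeast {E : ℝ | ∃ v : Fin n → ℂ, v ≠ 0 ∧ P *ᵥ v = (p : ℂ) • v ∧ M *ᵥ v = (E : ℂ) • v}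
      ((toEuclideanCLM (n := Fin n) (𝕜 := ℂ) M).rayleighInfOn (sector P p)) := by
  convert ContinuousLinearMap.isLeast_rayleighInfOn
    (isSymmetric_toEuclideanLin_iff.2 hM) (hc.mapsTo_sector p) using 1
  ext E
  constructor
  · rintro ⟨v, hv0, hvP, hvM⟩
    exact ⟨WithLp.toLp 2 v, mem_sector.2 hvP, by simpa using hv0,
      congrArg (WithLp.toLp 2) hvM⟩
  · rintro ⟨v, hvP, hv0, hvM⟩
    exact ⟨v.ofLp, by simpa using hv0, mem_sector.1 hvP, congrArg WithLp.ofLp hvM⟩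

theorem minInSector_eq_rayleighInfOn {M P : Matrix (Fin n) (Fin n) ℂ} (hM : M.IsHermitian)
    (hc : Commute M P) {p : ℝ} [Nontrivial (sector P p)] :
    minInSector M P p = (toEuclideanCLM (n := Fin n) (𝕜 := ℂ) M).rayleighInfOn (sector P p) :=
  (isLeast_rayleighInfOn_sector hM hc).csInf_eq

theorem isLeast_minInSector {M P : Matrix (Fin n) (Fin n) ℂ} (hM : M.IsHermitian)
    (hc : Commute M P) {p : ℝ} (hp : ∃ v : Fin n → ℂ, v ≠ 0 ∧ P *ᵥ v = (p : ℂ) • v) :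
    IsLeast {E : ℝ | ∃ v : Fin n → ℂ, v ≠ 0 ∧ P *ᵥ v = (p : ℂ) • v ∧ M *ᵥ v = (E : ℂ) • v}
      (minInSector M P p) := by
  have := nontrivial_sector hp
  rw [minInSector_eq_rayleighInfOn hM hc]
  exact isLeast_rayleighInfOn_sector hM hc

theorem continuous_minInSector_lineMap {H0 H1 P : Matrix (Fin n) (Fin n) ℂ}
    (hH0 : H0.IsHermitian) (hH1 : H1.IsHermitian) (hc0 : Commute H0 P) (hc1 : Commute H1 P)
    {p : ℝ} (hp : ∃ v : Fin n → ℂ, v ≠ 0 ∧ P *ᵥ v = (p : ℂ) • v) :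
    Continuous fun s : ℝ => minInSector ((1 - s) • H0 + s • H1) P p := by
  have := nontrivial_sector hp
  let A := toEuclideanCLM (n := Fin n) (𝕜 := ℂ)
  have hA : ∀ (r : ℝ) (M : Matrix (Fin n) (Fin n) ℂ), A (r • M) = r • A M :=
    A.toAlgEquiv.toLinearMap.map_smul_of_tower
  have h : (fun s : ℝ => minInSector ((1 - s) • H0 + s • H1) P p) =
      fun s : ℝ => ((1 - s) • A H0 + s • A H1).rayleighInfOn (sector P p) := by
    funext s
    rw [minInSector_eq_rayleighInfOn
      ((hH0.smul (IsSelfAdjoint.all _)).add (hH1.smul (IsSelfAdjoint.all _)))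
      ((hc0.smul_left _).add_left (hc1.smul_left _)), map_add, hA, hA]
  rw [h]
  exact (ContinuousLinearMap.lipschitzWith_rayleighInfOn _).continuous.comp (by fun_prop)

theorem minInSector_le_of_isLeast {M P : Matrix (Fin n) (Fin n) ℂ} (hM : M.IsHermitian)
    (hc : Commute M P) {p q E₀ : ℝ}
    (hg : IsLeast {E : ℝ | ∃ v : Fin n → ℂ, v ≠ 0 ∧ M *ᵥ v = (E : ℂ) • v} E₀)
    (hv : ∃ v : Fin n → ℂ, v ≠ 0 ∧ P *ᵥ v = (p : ℂ) • v ∧ M *ᵥ v = (E₀ : ℂ) • v)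
    (hq : ∃ v : Fin n → ℂ, v ≠ 0 ∧ P *ᵥ v = (q : ℂ) • v) :
    minInSector M P p ≤ minInSector M P q := by
  obtain ⟨v, hv0, hvP, hvM⟩ := hv
  obtain ⟨w, hw0, -, hwM⟩ := (isLeast_minInSector hM hc hq).1
  calc minInSector M P p ≤ E₀ := (isLeast_minInSector hM hc ⟨v, hv0, hvP⟩).2 ⟨v, hv0, hvP, hvM⟩
    _ ≤ minInSector M P q := hg.2 ⟨w, hw0, hwM⟩

end Sector

theorem ground_state_level_crossing_general {n : ℕ}
    (H0 H1 P : Matrix (Fin n) (Fin n) ℂ)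
    (hH0 : H0.IsHermitian) (hH1 : H1.IsHermitian)
    (hc0 : H0 * P = P * H0) (hc1 : H1 * P = P * H1)
    (p0 p1 : ℝ) (E0 E1 : ℝ)
    (hg0 : IsLeast {E : ℝ | ∃ v : Fin n → ℂ, v ≠ 0 ∧ H0.mulVec v = (E : ℂ) • v} E0)
    (hv0 : ∃ v : Fin n → ℂ, v ≠ 0 ∧ P.mulVec v = (p0 : ℂ) • v ∧
      H0.mulVec v = (E0 : ℂ) • v)
    (hg1 : IsLeast {E : ℝ | ∃ v : Fin n → ℂ, v ≠ 0 ∧ H1.mulVec v = (E : ℂ) • v} E1)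
    (hv1 : ∃ v : Fin n → ℂ, v ≠ 0 ∧ P.mulVec v = (p1 : ℂ) • v ∧
      H1.mulVec v = (E1 : ℂ) • v) :
    ∃ s ∈ Set.Icc (0 : ℝ) 1,
      minInSector ((1 - s) • H0 + s • H1) P p0
        = minInSector ((1 - s) • H0 + s • H1) P p1 := by
  have hp0 : ∃ v : Fin n → ℂ, v ≠ 0 ∧ P *ᵥ v = (p0 : ℂ) • v :=
    hv0.imp fun _ ⟨hv, hvP, _⟩ => ⟨hv, hvP⟩
  have hp1 : ∃ v : Fin n → ℂ, v ≠ 0 ∧ P *ᵥ v = (p1 : ℂ) • v :=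
    hv1.imp fun _ ⟨hv, hvP, _⟩ => ⟨hv, hvP⟩
  have hcont := (continuous_minInSector_lineMap hH0 hH1 hc0 hc1 hp0).sub
    (continuous_minInSector_lineMap hH0 hH1 hc0 hc1 hp1)
  have hstart := minInSector_le_of_isLeast hH0 hc0 hg0 hv0 hp1
  have hend := minInSector_le_of_isLeast hH1 hc1 hg1 hv1 hp0
  obtain ⟨s, hs, hzero⟩ := intermediate_value_Icc zero_le_one hcont.continuousOn
    ⟨sub_nonpos.2 (by simpa using hstart), sub_nonneg.2 (by simpa using hend)⟩
  exact ⟨s, hs, sub_eq_zero.1 hzero⟩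

/-- Ground-state level crossing: if Hermitian `H₀, H₁` both commute with a Hermitian
conserved quantity `P`, the ground state of `H₀` lies in the `P = p₀` eigenspace, the
ground state of `H₁` lies in the `P = p₁` eigenspace, and `p₀ ≠ p₁`, then along
`H(s) = (1-s)H₀ + sH₁` there is some `s* ∈ [0,1]` where the minimal eigenvalues in the
two sectors coincide. -/
theorem ground_state_level_crossing {n : ℕ}
    (H0 H1 P : Matrix (Fin n) (Fin n) ℂ)
    (hH0 : H0.IsHermitian) (hH1 : H1.IsHermitian) (hP : P.IsHermitian)
    (hc0 : H0 * P = P * H0) (hc1 : H1 * P = P * H1)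
    (p0 p1 : ℝ) (hp : p0 ≠ p1) (E0 E1 : ℝ)
    (hg0 : IsLeast {E : ℝ | ∃ v : Fin n → ℂ, v ≠ 0 ∧ H0.mulVec v = (E : ℂ) • v} E0)
    (hv0 : ∃ v : Fin n → ℂ, v ≠ 0 ∧ P.mulVec v = (p0 : ℂ) • v ∧
      H0.mulVec v = (E0 : ℂ) • v)
    (hg1 : IsLeast {E : ℝ | ∃ v : Fin n → ℂ, v ≠ 0 ∧ H1.mulVec v = (E : ℂ) • v} E1)
    (hv1 : ∃ v : Fin n → ℂ, v ≠ 0 ∧ P.mulVec v = (p1 : ℂ) • v ∧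
      H1.mulVec v = (E1 : ℂ) • v)
    (honly0 : ∀ v : Fin n → ℂ, v ≠ 0 → H0.mulVec v = (E0 : ℂ) • v →
      P.mulVec v = (p0 : ℂ) • v)
    (honly1 : ∀ v : Fin n → ℂ, v ≠ 0 → H1.mulVec v = (E1 : ℂ) • v →
      P.mulVec v = (p1 : ℂ) • v) :
    ∃ s ∈ Set.Icc (0 : ℝ) 1,
      minInSector ((1 - s) • H0 + s • H1) P p0
        = minInSector ((1 - s) • H0 + s • H1) P p1 :=
  ground_state_level_crossing_general H0 H1 P hH0 hH1 hc0 hc1 p0 p1 E0 E1 hg0 hv0 hg1 hv1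
end
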